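/- (Main multi-step maximization theorem.) Assume 1 ≥ b_1 ≥ b_2 ≥ … ≥ b_m ≥ 0. Then for every fibrewise supermodular function f : 𝓛^n → ℝ and every x ∈ M_n(b), one has E_x(f) ≤ E_{(q*)^{⊗n}}(f); consequently the maximum of E_x(f) over x ∈ M_n(b) equals E_{(q*)^{⊗n}}(f), i.e. it is attained at the product of n copies of the upper supermodular vertex measure. -/
import Mathlib


noncomputable section

open Finset

/-- `ℓ_i` : indicator of `i ∈ S`. -/
def ell {m : ℕ} (i : Fin m) (S : Finset (Fin m)) : ℝ := if i ∈ S then 1 else 0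

/-- `μ_j = {1,…,j}` (the first `j` elements of `Fin m`). -/
def mu (m j : ℕ) : Finset (Fin m) := Finset.univ.filter fun i => (i : ℕ) < j

/-- paper `b_j` for `j = 0,…,m`, with `b_0 = 1` (and `0` beyond `m`). -/
def bpaper {m : ℕ} (b : Fin m → ℝ) (j : ℕ) : ℝ :=
  if j = 0 then 1 else if h : j - 1 < m then b ⟨j - 1, h⟩ else 0

/-- the upper supermodular vertex measure `q*`:
`q*(μ_j) = b_j − b_{j+1}` for `0 ≤ j ≤ m−1`, `q*(μ_m) = b_m`, and `q* = 0` elsewhere. -/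
def qStar {m : ℕ} (b : Fin m → ℝ) (S : Finset (Fin m)) : ℝ :=
  ∑ j ∈ Finset.range (m + 1), if S = mu m j then bpaper b j - bpaper b (j + 1) else 0

/-- the lower supermodular vertex measure `q_*`:
`q_*(∅) = 1 − Σᵢ bᵢ`, `q_*({i}) = bᵢ`, and `q_* = 0` elsewhere. -/
def qLow {m : ℕ} (b : Fin m → ℝ) (S : Finset (Fin m)) : ℝ :=
  if S = ∅ then 1 - ∑ i, b i else ∑ i : Fin m, if S = {i} then b i else 0

/-- membership in `M_1(b)`: a probability function with `E_x(ℓ_i) = b_i` for all `i`. -/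
def MemM1 {m : ℕ} (b : Fin m → ℝ) (x : Finset (Fin m) → ℝ) : Prop :=
  (∀ S, 0 ≤ x S) ∧ (∑ S, x S = 1) ∧ (∀ i, ∑ S, ell i S * x S = b i)

/-- membership in `M_n(b)`: a probability function on `𝓛^n` satisfying, for every step `k`,
every prefix `λ` and every `i`, the conditional moment condition. -/
def MemMn {m n : ℕ} (b : Fin m → ℝ) (x : (Fin n → Finset (Fin m)) → ℝ) : Prop :=
  (∀ ω, 0 ≤ x ω) ∧ (∑ ω, x ω = 1) ∧
  (∀ (k : Fin n) (lam : Fin n → Finset (Fin m)) (i : Fin m),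
    (∑ ω, if ∀ j : Fin n, j < k → ω j = lam j then ell i (ω k) * x ω else 0) =
      b i * ∑ ω, if ∀ j : Fin n, j < k → ω j = lam j then x ω else 0)

/-- supermodular function on `𝓛`. -/
def Supermod {m : ℕ} (f : Finset (Fin m) → ℝ) : Prop :=
  ∀ S T, f S + f T ≤ f (S ∪ T) + f (S ∩ T)

/-- fibrewise supermodular function on `𝓛^n`. -/
def FibSupermod {m n : ℕ} (f : (Fin n → Finset (Fin m)) → ℝ) : Prop :=
  ∀ (k : Fin n) (lam : Fin n → Finset (Fin m)),
    Supermod fun S => f (Function.update lam k S)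

/-- the product measure `q^{⊗n}`. -/
def prodM {m n : ℕ} (q : Finset (Fin m) → ℝ) (ω : Fin n → Finset (Fin m)) : ℝ :=
  ∏ k, q (ω k)
section aux1
variable {m : ℕ} (b : Fin m → ℝ)

lemma mem_mu {i : Fin m} {j : ℕ} : i ∈ mu m j ↔ (i : ℕ) < j := by simp [mu]

lemma mu_zero : mu m 0 = ∅ := by ext i; simp [mem_mu]

lemma bpaper_zero : bpaper b 0 = 1 := rfl

lemma bpaper_succ (j : ℕ) : bpaper b (j+1) = if h : j < m then b ⟨j, h⟩ else 0 := by
  simp [bpaper]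

lemma bpaper_top : bpaper b (m+1) = 0 := by simp [bpaper_succ]

lemma bpaper_antitone (hb1 : ∀ i, b i ≤ 1) (hb0 : ∀ i, 0 ≤ b i)
    (hmono : ∀ i j : Fin m, i ≤ j → b j ≤ b i) (j : ℕ) :
    bpaper b (j+1) ≤ bpaper b j := by
  rcases j with _ | l
  · rw [bpaper_zero, bpaper_succ]
    split
    · exact hb1 _
    · norm_num
  · rw [bpaper_succ, bpaper_succ]
    by_cases h : l + 1 < m
    · have hl : l < m := Nat.lt_of_succ_lt h
      rw [dif_pos h, dif_pos hl]
      exact hmono ⟨l, hl⟩ ⟨l+1, h⟩ (by simp [Fin.le_def])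
    · rw [dif_neg h]
      split
      · exact hb0 _
      · exact le_refl 0

/-- expectation against `qStar` as a sum over the chain. -/
lemma qsum (g : Finset (Fin m) → ℝ) :
    ∑ S, qStar b S * g S
      = ∑ j ∈ Finset.range (m+1), (bpaper b j - bpaper b (j+1)) * g (mu m j) := by
  unfold qStar
  simp only [Finset.sum_mul, ite_mul, zero_mul]
  rw [Finset.sum_comm]
  simp [Finset.sum_ite_eq']

lemma qStar_nonneg (hb1 : ∀ i, b i ≤ 1) (hb0 : ∀ i, 0 ≤ b i)
    (hmono : ∀ i j : Fin m, i ≤ j → b j ≤ b i) (S : Finset (Fin m)) :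
    0 ≤ qStar b S := by
  apply Finset.sum_nonneg
  intro j _
  have := bpaper_antitone b hb1 hb0 hmono j
  split
  · linarith
  · exact le_refl 0

end aux1
section aux2
variable {m : ℕ} (b : Fin m → ℝ)

lemma telescope_ite (c : ℕ → ℝ) (a : ℕ) (M : ℕ) :
    ∑ j ∈ Finset.range M, (if a < j then c j - c (j+1) else 0)
      = if a < M then c (a+1) - c M else 0 := by
  induction M with
  | zero => simp
  | succ M ih =>
    rw [Finset.sum_range_succ, ih]
    rcases lt_trichotomy a M with h | h | h
    · rw [if_pos h, if_pos h, if_pos (Nat.lt_succ_of_lt h)]; ring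
    · subst h
      simp [Nat.lt_irrefl, Nat.lt_succ_self]
    · rw [if_neg (Nat.lt_asymm h), if_neg (Nat.lt_asymm h),
        if_neg (by omega)]
      ring

lemma qStar_sum : ∑ S, qStar b S = 1 := by
  have := qsum b (fun _ => 1)
  simp only [mul_one] at this
  rw [this, Finset.sum_range_sub' (f := fun j => bpaper b j)]
  rw [bpaper_zero, bpaper_top]
  ring

lemma ell_mu (i : Fin m) (j : ℕ) : ell i (mu m j) = if (i:ℕ) < j then 1 else 0 := by
  simp [ell, mem_mu]

lemma qStar_moment (i : Fin m) : ∑ S, ell i S * qStar b S = b i := by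
  have h : ∑ S, qStar b S * ell i S = b i := by
    rw [qsum b (ell i)]
    have : ∀ j ∈ Finset.range (m+1),
        (bpaper b j - bpaper b (j+1)) * ell i (mu m j)
          = if (i:ℕ) < j then bpaper b j - bpaper b (j+1) else 0 := by
      intro j _
      rw [ell_mu]
      split <;> ring
    rw [Finset.sum_congr rfl this, telescope_ite]
    rw [if_pos (by omega : (i:ℕ) < m + 1), bpaper_top, bpaper_succ,
      dif_pos i.isLt]
    simp
  rw [← h]
  exact Finset.sum_congr rfl fun S _ => mul_comm _ _

lemma abel_sum (c G : ℕ → ℝ) (M : ℕ) :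
    ∑ j ∈ Finset.range (M+1), (c j - c (j+1)) * G j
      = c 0 * G 0 - c (M+1) * G M + ∑ i ∈ Finset.range M, c (i+1) * (G (i+1) - G i) := by
  induction M with
  | zero => simp; ring
  | succ M ih =>
    rw [Finset.sum_range_succ, ih]
    rw [Finset.sum_range_succ (f := fun i => c (i+1) * (G (i+1) - G i))]
    ring

lemma qStar_expect (g : Finset (Fin m) → ℝ) :
    ∑ S, qStar b S * g S
      = g ∅ + ∑ i : Fin m, b i * (g (mu m ((i:ℕ)+1)) - g (mu m (i:ℕ))) := by
  rw [qsum b g, abel_sum (fun j => bpaper b j) (fun j => g (mu m j)) m,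
    bpaper_zero, bpaper_top, mu_zero]
  have : ∑ i ∈ Finset.range m, bpaper b (i+1) * (g (mu m (i+1)) - g (mu m i))
      = ∑ i : Fin m, b i * (g (mu m ((i:ℕ)+1)) - g (mu m (i:ℕ))) := by
    rw [Finset.sum_range fun i => bpaper b (i+1) * (g (mu m (i+1)) - g (mu m i))]
    apply Finset.sum_congr rfl
    intro i _
    rw [bpaper_succ, dif_pos i.isLt]
  rw [this]
  ring

end aux2
section aux3
variable {m : ℕ} (b : Fin m → ℝ)

lemma chain_bound {g : Finset (Fin m) → ℝ} (hg : Supermod g) :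
    ∀ S : Finset (Fin m),
      g S ≤ g ∅ + ∑ i ∈ S, (g (mu m ((i:ℕ)+1)) - g (mu m (i:ℕ))) := by
  intro S
  induction S using Finset.strongInduction with
  | _ S ih =>
    rcases S.eq_empty_or_nonempty with rfl | hS
    · simp
    · set i := S.max' hS with hi
      have hiS : i ∈ S := S.max'_mem hS
      have hmax : ∀ j ∈ S, j ≤ i := fun j hj => S.le_max' j hj
      have hunion : S ∪ mu m (i:ℕ) = mu m ((i:ℕ)+1) := by
        ext j
        simp only [Finset.mem_union, mem_mu]
        constructor
        · rintro (hj | hj)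
          · exact Nat.lt_succ_of_le (hmax j hj)
          · exact Nat.lt_succ_of_lt hj
        · intro hj
          rcases Nat.lt_succ_iff_lt_or_eq.mp hj with h | h
          · exact Or.inr h
          · exact Or.inl (by rwa [show j = i from Fin.ext h])
      have hinter : S ∩ mu m (i:ℕ) = S.erase i := by
        ext j
        simp only [Finset.mem_inter, mem_mu, Finset.mem_erase]
        constructor
        · rintro ⟨hj, hj'⟩
          exact ⟨fun h => by simp [h] at hj', hj⟩
        · rintro ⟨hne, hj⟩
          refine ⟨hj, ?_⟩
          have h1 : (j:ℕ) ≤ (i:ℕ) := hmax j hj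
          have h2 : (j:ℕ) ≠ (i:ℕ) := fun h => hne (Fin.ext h)
          omega
      have key := hg S (mu m (i:ℕ))
      rw [hunion, hinter] at key
      have ih' := ih (S.erase i) (Finset.erase_ssubset hiS)
      have hsum : ∑ i' ∈ S, (g (mu m ((i':ℕ)+1)) - g (mu m (i':ℕ)))
          = (g (mu m ((i:ℕ)+1)) - g (mu m (i:ℕ)))
            + ∑ i' ∈ S.erase i, (g (mu m ((i':ℕ)+1)) - g (mu m (i':ℕ))) :=
        (Finset.add_sum_erase S _ hiS).symm
      rw [hsum]
      linarith

lemma sum_mem_eq_ell (d : Fin m → ℝ) (S : Finset (Fin m)) :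
    ∑ i ∈ S, d i = ∑ i : Fin m, ell i S * d i := by
  symm
  simp only [ell, ite_mul, one_mul, zero_mul]
  rw [Finset.sum_ite_mem, Finset.univ_inter]

/-- one-step maximization, unnormalized conditional form. -/
lemma one_step (hb1 : ∀ i, b i ≤ 1) (hb0 : ∀ i, 0 ≤ b i)
    (hmono : ∀ i j : Fin m, i ≤ j → b j ≤ b i)
    {g : Finset (Fin m) → ℝ} (hg : Supermod g)
    (y : Finset (Fin m) → ℝ) (hy0 : ∀ S, 0 ≤ y S)
    (hmom : ∀ i, ∑ S, ell i S * y S = b i * ∑ S, y S) :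
    ∑ S, y S * g S ≤ (∑ S, y S) * ∑ S, qStar b S * g S := by
  have step1 : ∑ S, y S * g S
      ≤ ∑ S, y S * (g ∅ + ∑ i ∈ S, (g (mu m ((i:ℕ)+1)) - g (mu m (i:ℕ)))) := by
    apply Finset.sum_le_sum
    intro S _
    exact mul_le_mul_of_nonneg_left (chain_bound hg S) (hy0 S)
  refine le_trans step1 (le_of_eq ?_)
  have expand : ∀ S : Finset (Fin m),
      y S * (g ∅ + ∑ i ∈ S, (g (mu m ((i:ℕ)+1)) - g (mu m (i:ℕ))))
        = y S * g ∅ + ∑ i : Fin m, (ell i S * y S) * (g (mu m ((i:ℕ)+1)) - g (mu m (i:ℕ))) := by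
    intro S
    rw [mul_add, sum_mem_eq_ell]
    rw [Finset.mul_sum]
    congr 1
    apply Finset.sum_congr rfl
    intro i _
    ring
  rw [Finset.sum_congr rfl fun S _ => expand S, Finset.sum_add_distrib]
  rw [Finset.sum_comm]
  have hswap : ∀ i : Fin m,
      ∑ S, (ell i S * y S) * (g (mu m ((i:ℕ)+1)) - g (mu m (i:ℕ)))
        = b i * (∑ S, y S) * (g (mu m ((i:ℕ)+1)) - g (mu m (i:ℕ))) := by
    intro i
    rw [← Finset.sum_mul, hmom i]
  rw [Finset.sum_congr rfl fun i _ => hswap i, ← Finset.sum_mul, qStar_expect]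
  rw [mul_add, Finset.mul_sum]
  congr 1
  apply Finset.sum_congr rfl
  intro i _
  ring

end aux3
section aux4
variable {m n : ℕ}

lemma factor_sum (q t : Finset (Fin m) → ℝ) (K : Fin n) (lam : Fin n → Finset (Fin m)) :
    (∑ ω : Fin n → Finset (Fin m),
        if ∀ j : Fin n, j < K → ω j = lam j then t (ω K) * prodM q ω else 0)
      = (∏ j ∈ Finset.univ.filter (fun j : Fin n => j < K), q (lam j))
        * ((∑ S, t S * q S) * ∏ _j ∈ Finset.univ.filter (fun j : Fin n => K < j), (∑ S, q S)) := by
  classical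
  set c : Fin n → Finset (Fin m) → ℝ :=
    fun j S => if j < K then (if S = lam j then q S else 0)
      else if j = K then t S * q S else q S with hc
  have step1 : ∀ ω : Fin n → Finset (Fin m),
      (if ∀ j : Fin n, j < K → ω j = lam j then t (ω K) * prodM q ω else 0)
        = ∏ j, c j (ω j) := by
    intro ω
    by_cases hpref : ∀ j : Fin n, j < K → ω j = lam j
    · rw [if_pos hpref]
      have hupd : ∀ j, c j (ω j)
          = Function.update (fun j => q (ω j)) K (t (ω K) * q (ω K)) j := by
        intro j
        rcases lt_trichotomy j K with h | h | h
        · rw [Function.update_of_ne (ne_of_lt h)]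
          simp only [hc, if_pos h, if_pos (hpref j h)]
        · subst h
          simp [hc]
        · rw [Function.update_of_ne (ne_of_gt h)]
          simp only [hc, if_neg (not_lt_of_gt h), if_neg (ne_of_gt h)]
      rw [Finset.prod_congr rfl (fun j _ => hupd j),
        Finset.prod_update_of_mem (Finset.mem_univ K)]
      unfold prodM
      rw [← Finset.mul_prod_erase Finset.univ (fun j => q (ω j)) (Finset.mem_univ K),
        Finset.sdiff_singleton_eq_erase]
      ring
    · rw [if_neg hpref]
      push_neg at hpref
      obtain ⟨j, hj, hne⟩ := hpref
      symm
      apply Finset.prod_eq_zero (Finset.mem_univ j)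
      simp only [hc, if_pos hj, if_neg hne]
  rw [Finset.sum_congr rfl (fun ω _ => step1 ω)]
  have step2 : (∑ ω : Fin n → Finset (Fin m), ∏ j, c j (ω j))
      = ∏ j, ∑ S, c j S := by
    rw [Finset.prod_univ_sum]
    rw [Fintype.piFinset_univ]
  rw [step2]
  have hval : ∀ j : Fin n,
      (∑ S, c j S) = if j < K then q (lam j) else if j = K then ∑ S, t S * q S else ∑ S, q S := by
    intro j
    rcases lt_trichotomy j K with h | h | h
    · rw [if_pos h]
      simp only [hc, if_pos h]
      rw [Finset.sum_ite_eq' Finset.univ (lam j) q]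
      simp
    · subst h
      simp [hc]
    · rw [if_neg (not_lt_of_gt h), if_neg (ne_of_gt h)]
      simp only [hc, if_neg (not_lt_of_gt h), if_neg (ne_of_gt h)]
  rw [Finset.prod_congr rfl (fun j _ => hval j)]
  rw [← Finset.prod_filter_mul_prod_filter_not Finset.univ (fun j => j < K)]
  congr 1
  · apply Finset.prod_congr rfl
    intro j hj
    rw [Finset.mem_filter] at hj
    rw [if_pos hj.2]
  · have hK : K ∈ Finset.univ.filter (fun j : Fin n => ¬ j < K) := by simp
    rw [← Finset.mul_prod_erase _ _ hK]
    congr 1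
    · simp
    · have herase : (Finset.univ.filter (fun j : Fin n => ¬ j < K)).erase K
          = Finset.univ.filter (fun j : Fin n => K < j) := by
        ext j
        simp only [Finset.mem_erase, Finset.mem_filter, Finset.mem_univ, true_and]
        rw [Fin.lt_def, Fin.lt_def, Fin.ne_iff_vne]
        omega
      rw [herase]
      apply Finset.prod_congr rfl
      intro j hj
      rw [Finset.mem_filter] at hj
      rw [if_neg (not_lt_of_gt hj.2), if_neg (ne_of_gt hj.2)]

lemma prodM_memMn (b : Fin m → ℝ) (hmono : ∀ i j : Fin m, i ≤ j → b j ≤ b i)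
    (hb1 : ∀ i, b i ≤ 1) (hb0 : ∀ i, 0 ≤ b i) :
    MemMn (n := n) b (prodM (qStar b)) := by
  refine ⟨?_, ?_, ?_⟩
  · intro ω
    exact Finset.prod_nonneg fun j _ => qStar_nonneg b hb1 hb0 hmono (ω j)
  · have h := Finset.prod_univ_sum (fun _ : Fin n => (Finset.univ : Finset (Finset (Fin m))))
      (fun _ S => qStar b S)
    rw [Fintype.piFinset_univ] at h
    unfold prodM
    rw [← h]
    simp [qStar_sum b]
  · intro K lam i
    rw [factor_sum (qStar b) (ell i) K lam]
    have h1 : (∑ ω : Fin n → Finset (Fin m),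
        if ∀ j : Fin n, j < K → ω j = lam j then prodM (qStar b) ω else 0)
        = ∑ ω : Fin n → Finset (Fin m),
          if ∀ j : Fin n, j < K → ω j = lam j
            then (fun _ : Finset (Fin m) => (1:ℝ)) (ω K) * prodM (qStar b) ω else 0 := by
      apply Finset.sum_congr rfl
      intro ω _
      split <;> simp
    rw [h1, factor_sum (qStar b) (fun _ => 1) K lam]
    rw [qStar_moment b i]
    have h2 : (∑ S : Finset (Fin m), (1:ℝ) * qStar b S) = 1 := by
      simp [qStar_sum b]
    rw [h2]
    ring
end aux4
section aux5
variable {m n : ℕ}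

open Classical in
/-- the hybrid objective: prefix matched to `lam` below `k`, `qStar`-weights from `k` on. -/
def Fk (b : Fin m → ℝ) (f : (Fin n → Finset (Fin m)) → ℝ) (k : ℕ)
    (lam : Fin n → Finset (Fin m)) : ℝ :=
  ∑ ω, if ∀ j : Fin n, (j:ℕ) < k → ω j = lam j
    then (∏ j ∈ Finset.univ.filter (fun j : Fin n => k ≤ (j:ℕ)), qStar b (ω j)) * f ω else 0

open Classical in
/-- the conditional-slice function at coordinate `K`. -/
def Gk (b : Fin m → ℝ) (f : (Fin n → Finset (Fin m)) → ℝ) (K : Fin n)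
    (lam : Fin n → Finset (Fin m)) (S : Finset (Fin m)) : ℝ :=
  ∑ ω, if (∀ j : Fin n, (j:ℕ) < (K:ℕ) → ω j = lam j) ∧ ω K = ∅
    then (∏ j ∈ Finset.univ.filter (fun j : Fin n => (K:ℕ)+1 ≤ (j:ℕ)), qStar b (ω j))
      * f (Function.update ω K S) else 0

variable (b : Fin m → ℝ) (f : (Fin n → Finset (Fin m)) → ℝ)

lemma Gk_congr (K : Fin n) {lam lam' : Fin n → Finset (Fin m)}
    (h : ∀ j : Fin n, (j:ℕ) < (K:ℕ) → lam' j = lam j) (S : Finset (Fin m)) :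
    Gk b f K lam' S = Gk b f K lam S := by
  classical
  unfold Gk
  apply Finset.sum_congr rfl
  intro ω _
  apply if_congr _ rfl rfl
  constructor
  · rintro ⟨h1, h2⟩
    exact ⟨fun j hj => (h1 j hj).trans (h j hj), h2⟩
  · rintro ⟨h1, h2⟩
    exact ⟨fun j hj => (h1 j hj).trans (h j hj).symm, h2⟩

lemma reindexK (K : Fin n) (lam : Fin n → Finset (Fin m)) (S : Finset (Fin m)) :
    (∑ ω, if (∀ j : Fin n, (j:ℕ) < (K:ℕ) → ω j = lam j) ∧ ω K = S
        then (∏ j ∈ Finset.univ.filter (fun j : Fin n => (K:ℕ)+1 ≤ (j:ℕ)), qStar b (ω j))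
          * f ω else 0)
      = Gk b f K lam S := by
  classical
  unfold Gk
  rw [← Finset.sum_filter, ← Finset.sum_filter]
  apply Finset.sum_nbij' (fun ω => Function.update ω K ∅) (fun σ => Function.update σ K S)
  · intro ω hω
    rw [Finset.mem_filter] at hω ⊢
    obtain ⟨-, h1, h2⟩ := hω
    refine ⟨Finset.mem_univ _, fun j hj => ?_, Function.update_self _ _ _⟩
    rw [Function.update_of_ne (by exact fun hEq => by subst hEq; omega)]
    exact h1 j hj
  · intro σ hσ
    rw [Finset.mem_filter] at hσ ⊢
    obtain ⟨-, h1, h2⟩ := hσ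
    refine ⟨Finset.mem_univ _, fun j hj => ?_, Function.update_self _ _ _⟩
    rw [Function.update_of_ne (by exact fun hEq => by subst hEq; omega)]
    exact h1 j hj
  · intro ω hω
    rw [Finset.mem_filter] at hω
    rw [Function.update_idem, ← hω.2.2, Function.update_eq_self]
  · intro σ hσ
    rw [Finset.mem_filter] at hσ
    rw [Function.update_idem, ← hσ.2.2, Function.update_eq_self]
  · intro ω hω
    rw [Finset.mem_filter] at hω
    congr 1
    · apply Finset.prod_congr rfl
      intro j hj
      rw [Finset.mem_filter] at hj
      rw [Function.update_of_ne (by exact fun hEq => by subst hEq; omega)]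
    · rw [Function.update_idem, ← hω.2.2, Function.update_eq_self]
end aux5
section aux6
variable {m n : ℕ} (b : Fin m → ℝ) (f : (Fin n → Finset (Fin m)) → ℝ)

lemma filter_ge_insert (K : Fin n) :
    Finset.univ.filter (fun j : Fin n => (K:ℕ) ≤ (j:ℕ))
      = insert K (Finset.univ.filter (fun j : Fin n => (K:ℕ)+1 ≤ (j:ℕ))) := by
  ext j
  simp only [Finset.mem_filter, Finset.mem_univ, true_and, Finset.mem_insert]
  rw [Fin.ext_iff]
  omega

lemma K_notin_filter (K : Fin n) :
    K ∉ Finset.univ.filter (fun j : Fin n => (K:ℕ)+1 ≤ (j:ℕ)) := by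
  simp

lemma Fk_succ (K : Fin n) (lam : Fin n → Finset (Fin m)) :
    Fk b f ((K:ℕ)+1) lam = Gk b f K lam (lam K) := by
  classical
  rw [← reindexK b f K lam (lam K)]
  unfold Fk
  apply Finset.sum_congr rfl
  intro ω _
  apply if_congr _ rfl rfl
  constructor
  · intro h
    exact ⟨fun j hj => h j (by omega), h K (by omega)⟩
  · rintro ⟨h1, h2⟩ j hj
    rcases Nat.lt_succ_iff_lt_or_eq.mp hj with h | h
    · exact h1 j h
    · rw [show j = K from Fin.ext h]; exact h2

lemma Fk_eq_sum_Gk (K : Fin n) (lam : Fin n → Finset (Fin m)) :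
    Fk b f (K:ℕ) lam = ∑ S, qStar b S * Gk b f K lam S := by
  classical
  have h1 : ∀ S, qStar b S * Gk b f K lam S
      = ∑ ω, if (∀ j : Fin n, (j:ℕ) < (K:ℕ) → ω j = lam j) ∧ ω K = S
          then qStar b S
            * ((∏ j ∈ Finset.univ.filter (fun j : Fin n => (K:ℕ)+1 ≤ (j:ℕ)), qStar b (ω j))
              * f ω) else 0 := by
    intro S
    rw [← reindexK b f K lam S, Finset.mul_sum]
    apply Finset.sum_congr rfl
    intro ω _
    rw [mul_ite, mul_zero]
  rw [Finset.sum_congr rfl fun S _ => h1 S, Finset.sum_comm]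
  unfold Fk
  apply Finset.sum_congr rfl
  intro ω _
  by_cases hP : ∀ j : Fin n, (j:ℕ) < (K:ℕ) → ω j = lam j
  · rw [if_pos hP]
    have : ∀ S, ((∀ j : Fin n, (j:ℕ) < (K:ℕ) → ω j = lam j) ∧ ω K = S) ↔ ω K = S :=
      fun S => ⟨fun h => h.2, fun h => ⟨hP, h⟩⟩
    rw [Finset.sum_congr rfl fun S _ => if_congr (this S) rfl rfl]
    rw [Finset.sum_ite_eq (Finset.univ) (ω K)
      (fun S => qStar b S * ((∏ j ∈ Finset.univ.filter (fun j : Fin n => (K:ℕ)+1 ≤ (j:ℕ)),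
        qStar b (ω j)) * f ω))]
    rw [if_pos (Finset.mem_univ _)]
    rw [filter_ge_insert K, Finset.prod_insert (K_notin_filter K)]
    ring
  · rw [if_neg hP]
    symm
    apply Finset.sum_eq_zero
    intro S _
    rw [if_neg (fun h => hP h.1)]

lemma Gk_supermod (hmono : ∀ i j : Fin m, i ≤ j → b j ≤ b i)
    (hb1 : ∀ i, b i ≤ 1) (hb0 : ∀ i, 0 ≤ b i) (hf : FibSupermod f)
    (K : Fin n) (lam : Fin n → Finset (Fin m)) :
    Supermod (Gk b f K lam) := by
  classical
  intro S T
  unfold Gk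
  rw [← Finset.sum_add_distrib, ← Finset.sum_add_distrib]
  apply Finset.sum_le_sum
  intro ω _
  by_cases h : (∀ j : Fin n, (j:ℕ) < (K:ℕ) → ω j = lam j) ∧ ω K = ∅
  · rw [if_pos h, if_pos h, if_pos h, if_pos h, ← mul_add, ← mul_add]
    exact mul_le_mul_of_nonneg_left (hf K ω S T)
      (Finset.prod_nonneg fun j _ => qStar_nonneg b hb1 hb0 hmono (ω j))
  · rw [if_neg h, if_neg h, if_neg h, if_neg h]

lemma Fk_n (lam : Fin n → Finset (Fin m)) : Fk b f n lam = f lam := by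
  classical
  unfold Fk
  have hfil : Finset.univ.filter (fun j : Fin n => n ≤ (j:ℕ)) = ∅ := by
    ext j
    simp only [Finset.mem_filter, Finset.mem_univ, true_and, Finset.notMem_empty, iff_false]
    exact Nat.not_le_of_lt j.isLt
  have h1 : ∀ ω : Fin n → Finset (Fin m),
      (∀ j : Fin n, (j:ℕ) < n → ω j = lam j) ↔ ω = lam :=
    fun ω => ⟨fun h => funext fun j => h j j.isLt, fun h j _ => by rw [h]⟩
  rw [Finset.sum_congr rfl fun ω _ => if_congr (h1 ω) rfl rfl]
  rw [hfil]
  simp [Finset.sum_ite_eq' Finset.univ lam]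

lemma Fk_zero (lam : Fin n → Finset (Fin m)) :
    Fk b f 0 lam = ∑ ω, prodM (qStar b) ω * f ω := by
  classical
  unfold Fk
  apply Finset.sum_congr rfl
  intro ω _
  rw [if_pos (fun j hj => absurd hj (Nat.not_lt_zero _))]
  congr 1
  unfold prodM
  apply Finset.prod_congr _ fun _ _ => rfl
  ext j
  simp
end aux6
section aux7
variable {m n : ℕ}

open Classical in
/-- conditional (unnormalized) distribution of coordinate `K` given prefix `lam`. -/
def Cd (x : (Fin n → Finset (Fin m)) → ℝ) (K : Fin n)
    (lam : Fin n → Finset (Fin m)) (S : Finset (Fin m)) : ℝ :=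
  ∑ ω, if (∀ j : Fin n, (j:ℕ) < (K:ℕ) → ω j = lam j) ∧ ω K = S then x ω else 0

variable (b : Fin m → ℝ) (f : (Fin n → Finset (Fin m)) → ℝ)

lemma Cd_pair (x : (Fin n → Finset (Fin m)) → ℝ) (K : Fin n)
    (lam : Fin n → Finset (Fin m)) (t : Finset (Fin m) → ℝ) :
    ∑ S, t S * Cd x K lam S
      = ∑ ω, if ∀ j : Fin n, (j:ℕ) < (K:ℕ) → ω j = lam j then t (ω K) * x ω else 0 := by
  classical
  unfold Cd
  have h1 : ∀ S, t S * (∑ ω, if (∀ j : Fin n, (j:ℕ) < (K:ℕ) → ω j = lam j) ∧ ω K = S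
      then x ω else 0)
      = ∑ ω, if (∀ j : Fin n, (j:ℕ) < (K:ℕ) → ω j = lam j) ∧ ω K = S
          then t S * x ω else 0 := by
    intro S
    rw [Finset.mul_sum]
    exact Finset.sum_congr rfl fun ω _ => by rw [mul_ite, mul_zero]
  rw [Finset.sum_congr rfl fun S _ => h1 S, Finset.sum_comm]
  apply Finset.sum_congr rfl
  intro ω _
  by_cases hP : ∀ j : Fin n, (j:ℕ) < (K:ℕ) → ω j = lam j
  · rw [if_pos hP]
    have heq : ∀ S, ((∀ j : Fin n, (j:ℕ) < (K:ℕ) → ω j = lam j) ∧ ω K = S) ↔ ω K = S :=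
      fun S => ⟨fun h => h.2, fun h => ⟨hP, h⟩⟩
    rw [Finset.sum_congr rfl fun S _ => if_congr (heq S) rfl rfl]
    rw [Finset.sum_ite_eq Finset.univ (ω K) (fun S => t S * x ω), if_pos (Finset.mem_univ _)]
  · rw [if_neg hP]
    apply Finset.sum_eq_zero
    intro S _
    rw [if_neg (fun h => hP h.1)]

/-- the one-coordinate replacement step. -/
lemma step_le (hmono : ∀ i j : Fin m, i ≤ j → b j ≤ b i)
    (hb1 : ∀ i, b i ≤ 1) (hb0 : ∀ i, 0 ≤ b i) (hf : FibSupermod f)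
    (x : (Fin n → Finset (Fin m)) → ℝ) (hx : MemMn b x) (K : Fin n) :
    ∑ lam, x lam * Fk b f ((K:ℕ)+1) lam ≤ ∑ lam, x lam * Fk b f (K:ℕ) lam := by
  classical
  -- convert the moment hypothesis into `ℕ`-valued comparisons
  have hconv : ∀ (t : (Fin n → Finset (Fin m)) → ℝ) (lam : Fin n → Finset (Fin m)),
      (∑ ω, if ∀ j : Fin n, j < K → ω j = lam j then t ω else 0)
        = ∑ ω, if ∀ j : Fin n, (j:ℕ) < (K:ℕ) → ω j = lam j then t ω else 0 := by
    intro t lam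
    apply Finset.sum_congr rfl
    intro ω _
    apply if_congr _ rfl rfl
    constructor
    · intro h j hj
      exact h j (Fin.lt_def.mpr hj)
    · intro h j hj
      exact h j (Fin.lt_def.mp hj)
  have hx3 : ∀ (lam : Fin n → Finset (Fin m)) (i : Fin m),
      (∑ ω, if ∀ j : Fin n, (j:ℕ) < (K:ℕ) → ω j = lam j then ell i (ω K) * x ω else 0)
        = b i * ∑ ω, if ∀ j : Fin n, (j:ℕ) < (K:ℕ) → ω j = lam j then x ω else 0 := by
    intro lam i
    rw [← hconv, ← hconv]
    exact hx.2.2 K lam i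
  -- rewrite both sides through `Gk`
  have hLrw : (∑ lam, x lam * Fk b f ((K:ℕ)+1) lam)
      = ∑ lam, x lam * Gk b f K lam (lam K) :=
    Finset.sum_congr rfl fun lam _ => by rw [Fk_succ b f K lam]
  have hRrw : (∑ lam, x lam * Fk b f (K:ℕ) lam)
      = ∑ lam, x lam * ∑ S, qStar b S * Gk b f K lam S :=
    Finset.sum_congr rfl fun lam _ => by rw [Fk_eq_sum_Gk b f K lam]
  rw [hLrw, hRrw]
  -- fiber decomposition over truncated prefixes
  set trunc : (Fin n → Finset (Fin m)) → (Fin n → Finset (Fin m)) :=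
    fun lam j => if (j:ℕ) < (K:ℕ) then lam j else ∅ with htrunc
  set R : Finset (Fin n → Finset (Fin m)) :=
    Finset.univ.filter (fun lam => trunc lam = lam) with hR
  have hmap : ∀ lam ∈ (Finset.univ : Finset (Fin n → Finset (Fin m))), trunc lam ∈ R := by
    intro lam _
    rw [hR, Finset.mem_filter]
    refine ⟨Finset.mem_univ _, funext fun j => ?_⟩
    by_cases hj : (j:ℕ) < (K:ℕ)
    · simp only [htrunc]
      rw [if_pos hj, if_pos hj]
    · simp only [htrunc]
      rw [if_neg hj, if_neg hj]
  have htr : ∀ r ∈ R, ∀ lam : Fin n → Finset (Fin m),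
      trunc lam = r ↔ ∀ j : Fin n, (j:ℕ) < (K:ℕ) → lam j = r j := by
    intro r hr lam
    rw [hR, Finset.mem_filter] at hr
    constructor
    · intro h j hj
      rw [← h]
      simp only [htrunc]
      rw [if_pos hj]
    · intro h
      funext j
      by_cases hj : (j:ℕ) < (K:ℕ)
      · simp only [htrunc]
        rw [if_pos hj]
        exact h j hj
      · have h2 : trunc r j = r j := by rw [hr.2]
        simp only [htrunc] at h2 ⊢
        rw [if_neg hj] at h2 ⊢
        exact h2
  rw [← Finset.sum_fiberwise_of_maps_to hmap (fun lam => x lam * Gk b f K lam (lam K)),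
    ← Finset.sum_fiberwise_of_maps_to hmap
      (fun lam => x lam * ∑ S, qStar b S * Gk b f K lam S)]
  apply Finset.sum_le_sum
  intro r hr
  -- identify inner sums
  have hL : ∑ lam ∈ Finset.univ.filter (fun lam => trunc lam = r),
      x lam * Gk b f K lam (lam K) = ∑ S, Gk b f K r S * Cd x K r S := by
    rw [Finset.sum_filter, Cd_pair]
    apply Finset.sum_congr rfl
    intro lam _
    rw [if_congr (htr r hr lam) rfl rfl]
    by_cases h : ∀ j : Fin n, (j:ℕ) < (K:ℕ) → lam j = r j
    · rw [if_pos h, if_pos h, Gk_congr b f K h (lam K), mul_comm]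
    · rw [if_neg h, if_neg h]
  have hsum : ∑ lam ∈ Finset.univ.filter (fun lam => trunc lam = r), x lam
      = ∑ S, Cd x K r S := by
    have := Cd_pair x K r (fun _ => 1)
    simp only [one_mul] at this
    rw [this, Finset.sum_filter]
    exact Finset.sum_congr rfl fun lam _ => if_congr (htr r hr lam) rfl rfl
  have hRr : ∑ lam ∈ Finset.univ.filter (fun lam => trunc lam = r),
      x lam * ∑ S, qStar b S * Gk b f K lam S
      = (∑ S, Cd x K r S) * ∑ S, qStar b S * Gk b f K r S := by
    rw [← hsum, Finset.sum_mul]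
    apply Finset.sum_congr rfl
    intro lam hlam
    rw [Finset.mem_filter] at hlam
    have hagree := (htr r hr lam).mp hlam.2
    rw [Finset.sum_congr rfl fun S _ => by rw [Gk_congr b f K hagree S]]
  rw [hL, hRr]
  have h1 : ∑ S, Gk b f K r S * Cd x K r S = ∑ S, Cd x K r S * Gk b f K r S :=
    Finset.sum_congr rfl fun S _ => mul_comm _ _
  rw [h1]
  apply one_step b hb1 hb0 hmono (Gk_supermod b f hmono hb1 hb0 hf K r)
  · intro S
    apply Finset.sum_nonneg
    intro ω _
    split
    · exact hx.1 ω
    · exact le_refl 0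
  · intro i
    rw [Cd_pair x K r (ell i), hx3 r i]
    congr 1
    have := Cd_pair x K r (fun _ => 1)
    simp only [one_mul] at this
    rw [this]
end aux7

/-- multi-step maximization: for fibrewise supermodular `f`, the expectation
over `M_n(b)` is maximized at the product measure `(q*)^{⊗n}`. -/
theorem multi_step_max {m n : ℕ} (hm : 0 < m) (hn : 0 < n) (b : Fin m → ℝ)
    (hmono : ∀ i j : Fin m, i ≤ j → b j ≤ b i)
    (hb1 : ∀ i, b i ≤ 1) (hb0 : ∀ i, 0 ≤ b i)
    (f : (Fin n → Finset (Fin m)) → ℝ) (hf : FibSupermod f) :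
    (∀ x, MemMn b x → ∑ ω, f ω * x ω ≤ ∑ ω, f ω * prodM (qStar b) ω) ∧
    IsGreatest {r : ℝ | ∃ x, MemMn b x ∧ r = ∑ ω, f ω * x ω}
      (∑ ω, f ω * prodM (qStar b) ω) := by
  classical
  have upper : ∀ x, MemMn b x → ∑ ω, f ω * x ω ≤ ∑ ω, f ω * prodM (qStar b) ω := by
    intro x hx
    have step : ∀ k : ℕ, k < n →
        ∑ lam, x lam * Fk b f (k+1) lam ≤ ∑ lam, x lam * Fk b f k lam := by
      intro k hk
      exact step_le b f hmono hb1 hb0 hf x hx ⟨k, hk⟩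
    have desc : ∀ k : ℕ, k ≤ n →
        ∑ lam, x lam * Fk b f k lam ≤ ∑ lam, x lam * Fk b f 0 lam := by
      intro k
      induction k with
      | zero => intro _; exact le_refl _
      | succ k ih =>
        intro hk
        exact le_trans (step k (Nat.lt_of_succ_le hk)) (ih (Nat.le_of_succ_le hk))
    have hn' := desc n (le_refl n)
    have hLn : ∑ lam, x lam * Fk b f n lam = ∑ ω, f ω * x ω :=
      Finset.sum_congr rfl fun lam _ => by rw [Fk_n b f lam, mul_comm]
    have hL0 : ∑ lam, x lam * Fk b f 0 lam = ∑ ω, f ω * prodM (qStar b) ω := by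
      rw [Finset.sum_congr rfl fun lam (_ : lam ∈ Finset.univ) => by rw [Fk_zero b f lam]]
      rw [← Finset.sum_mul, hx.2.1, one_mul]
      exact Finset.sum_congr rfl fun ω _ => mul_comm _ _
    rw [← hLn, ← hL0]
    exact hn'
  refine ⟨upper, ⟨prodM (qStar b), prodM_memMn b hmono hb1 hb0, rfl⟩, ?_⟩
  rintro r ⟨x, hx, rfl⟩
  exact upper x hx
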